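/- (Discrete version of the paper's Theorem 2: Geodesic Divergence Approximation.) Let C be a positive natural number and let p ∈ ℝ^C be a fixed probability vector with strictly positive components. Consider deviation vectors δ ∈ ℝ^C in the hyperplane H = {δ : ∑_{i=1}^{C} δ_i = 0}, so that q = p + δ is a probability vector with positive components for ‖δ‖ small. Then the Jeffreys divergence approximates the squared Fisher–Rao geodesic distance to fourth order: as δ → 0 within H, D_KL(p ‖ p+δ) + D_KL(p+δ ‖ p) = (2·arccos(∑_{i=1}^{C} √(p_i·(p_i + δ_i))))² + O(‖δ‖⁴); i.e. the difference D_J(p, p+δ) − d²(p, p+δ) is O(‖δ‖⁴) as δ → 0 in H. -/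

import Mathlib

open Real Finset Filter Asymptotics Topology

/-!
Write `x = δᵢ / pᵢ`. The Jeffreys divergence is `∑ pᵢ x log (1 + x)` and, on the hyperplane
`∑ δᵢ = 0`, the Hellinger defect `1 - s` of the Bhattacharyya coefficient
`s = ∑ √(pᵢ (pᵢ + δᵢ))` is `∑ pᵢ (1 + x/2 - √(1 + x))`. Both integrands agree with
`x² - x³/2` up to `O(x⁴)` (the second after scaling by `8`), so `D_J = 8 (1 - s) + O(‖δ‖⁴)`.
Finally `1 - s = O(‖δ‖²)` and `arccos² s = 2 (1 - s) + O((1 - s)²)`, so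
`(2 arccos s)² = 8 (1 - s) + O(‖δ‖⁴)`.
-/

lemma abs_sq_sub_two_mul_one_sub_cos_le (θ : ℝ) : |θ ^ 2 - 2 * (1 - cos θ)| ≤ θ ^ 4 / 12 := by
  -- `θ² - 2 (1 - cos θ) = 4 (t² - sin² t)` with `t = θ / 2`, and `|t - sin t| ≤ |t|³ / 6`.
  have hcos : cos θ = 1 - 2 * sin (θ / 2) ^ 2 := by
    rw [sin_sq_eq_half_sub]; ring_nf
  have hsub := abs_sub_sin_le (θ / 2)
  have hadd : |θ / 2 + sin (θ / 2)| ≤ 2 * |θ / 2| :=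
    (abs_add_le _ _).trans (by linarith [abs_sin_le_abs (x := θ / 2)])
  calc |θ ^ 2 - 2 * (1 - cos θ)| = |4 * ((θ / 2 - sin (θ / 2)) * (θ / 2 + sin (θ / 2)))| := by
        rw [hcos]; ring_nf
    _ = 4 * (|θ / 2 - sin (θ / 2)| * |θ / 2 + sin (θ / 2)|) := by
        rw [abs_mul, abs_mul, abs_of_pos four_pos]
    _ ≤ 4 * (|θ / 2| ^ 3 / 6 * (2 * |θ / 2|)) := by gcongr
    _ = θ ^ 4 / 12 := by
        rw [abs_div, abs_two]
        ring_nf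
        rw [← abs_pow, abs_of_nonneg (by positivity)]

lemma abs_arccos_sq_sub_le {s : ℝ} (h₁ : -1 ≤ s) (h₂ : s ≤ 1) :
    |arccos s ^ 2 - 2 * (1 - s)| ≤ π ^ 4 / 48 * (1 - s) ^ 2 := by
  have hcos : cos (arccos s) = s := cos_arccos h₁ h₂
  have hsq : arccos s ^ 2 ≤ π ^ 2 / 2 * (1 - s) := by
    have := cos_le_one_sub_mul_cos_sq (x := arccos s)
      (by rw [abs_of_nonneg (arccos_nonneg s)]; exact arccos_le_pi s)
    rw [hcos] at this
    field_simp at this ⊢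
    linarith
  calc |arccos s ^ 2 - 2 * (1 - s)| ≤ (arccos s ^ 2) ^ 2 / 12 := by
        simpa [hcos, ← pow_mul] using abs_sq_sub_two_mul_one_sub_cos_le (arccos s)
    _ ≤ (π ^ 2 / 2 * (1 - s)) ^ 2 / 12 := by gcongr
    _ = π ^ 4 / 48 * (1 - s) ^ 2 := by ring

lemma isBigO_mul_log_one_add_sub :
    (fun x : ℝ => x * log (1 + x) - (x ^ 2 - x ^ 3 / 2)) =O[𝓝 0] (· ^ 4) := by
  have hlog : (fun x : ℝ => log (1 + x) - (x - x ^ 2 / 2)) =O[𝓝 0] (· ^ 3) := by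
    refine IsBigO.of_bound 2 ?_
    filter_upwards [Metric.ball_mem_nhds (0 : ℝ) (by norm_num : (0 : ℝ) < 1 / 2)] with x hx
    rw [Metric.mem_ball, dist_zero_right, Real.norm_eq_abs] at hx
    have h := abs_log_sub_add_sum_range_le (x := -x) (by rw [abs_neg]; linarith) 2
    norm_num [sum_range_succ] at h
    rw [Real.norm_eq_abs, Real.norm_eq_abs, abs_pow,
      show log (1 + x) - (x - x ^ 2 / 2) = -x + x ^ 2 / 2 + log (1 + x) by ring]
    refine h.trans ?_
    rw [div_le_iff₀ (by linarith)]
    nlinarith [pow_nonneg (abs_nonneg x) 3]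
  exact ((isBigO_refl (fun x : ℝ => x) _).mul hlog).congr (fun x => by ring) (fun x => by ring)

lemma isBigO_sqrt_one_add_sub :
    (fun x : ℝ => √(1 + x) - (1 + x / 2 - x ^ 2 / 8 + x ^ 3 / 16)) =O[𝓝 0] (· ^ 4) := by
  -- `(√(1 + x) - P) (√(1 + x) + P) = 1 + x - P²` is `x⁴` times a polynomial, and `√(1 + x) + P → 2`.
  set P : ℝ → ℝ := fun x => 1 + x / 2 - x ^ 2 / 8 + x ^ 3 / 16
  set k : ℝ → ℝ := fun x => (-(5 / 64) + x / 64 - x ^ 2 / 256) / (√(1 + x) + P x)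
  have hcont : ContinuousAt (fun x => √(1 + x) + P x) 0 := by fun_prop
  have hk : Tendsto k (𝓝 0) (𝓝 (k 0)) :=
    ContinuousAt.div (by fun_prop) hcont (by norm_num [P])
  have hpos : ∀ᶠ x in 𝓝 (0 : ℝ), 0 < √(1 + x) + P x :=
    hcont.eventually (lt_mem_nhds (by norm_num [P]))
  refine ((isBigO_refl (· ^ 4) (𝓝 (0 : ℝ))).mul (isBigO_const_of_tendsto hk one_ne_zero)).congr'
    ?_ (by simp)
  filter_upwards [hpos, eventually_ge_nhds (by norm_num : (-1 : ℝ) < 0)] with x hx hx'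
  have hsq : √(1 + x) ^ 2 = 1 + x := sq_sqrt (by linarith)
  rw [mul_div_assoc', div_eq_iff hx.ne']
  linear_combination -hsq

lemma one_add_half_sub_sqrt_one_add_nonneg {x : ℝ} (hx : -1 ≤ x) :
    0 ≤ 1 + x / 2 - √(1 + x) := by
  -- For `-1 ≤ x` the left side is `(√(1 + x) - 1)² / 2`.
  nlinarith [sq_sqrt (by linarith : (0 : ℝ) ≤ 1 + x), sq_nonneg (√(1 + x) - 1)]

lemma one_add_half_sub_sqrt_one_add_le {x : ℝ} (hx : -1 ≤ x) :
    1 + x / 2 - √(1 + x) ≤ x ^ 2 / 2 := by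
  nlinarith [sq_sqrt (by linarith : (0 : ℝ) ≤ 1 + x), sqrt_nonneg (1 + x),
    mul_nonneg (sqrt_nonneg (1 + x)) (sq_nonneg (√(1 + x) - 1))]

lemma isBigO_one_add_half_sub_sqrt_one_add :
    (fun x : ℝ => 1 + x / 2 - √(1 + x)) =O[𝓝 0] (· ^ 2) := by
  refine IsBigO.of_bound (1 / 2) ?_
  filter_upwards [eventually_ge_nhds (by norm_num : (-1 : ℝ) < 0)] with x hx
  rw [Real.norm_eq_abs, Real.norm_eq_abs, abs_of_nonneg (one_add_half_sub_sqrt_one_add_nonneg hx),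
    abs_of_nonneg (sq_nonneg x)]
  linarith [one_add_half_sub_sqrt_one_add_le hx]

lemma isBigO_mul_log_one_add_sub_eight_mul :
    (fun x : ℝ => x * log (1 + x) - 8 * (1 + x / 2 - √(1 + x))) =O[𝓝 0] (· ^ 4) :=
  (isBigO_mul_log_one_add_sub.add (isBigO_sqrt_one_add_sub.const_mul_left 8)).congr_left
    fun x => by ring

lemma tendsto_apply_div_nhds_zero {ι : Type*} (p : ι → ℝ) (i : ι) :
    Tendsto (fun δ : ι → ℝ => δ i / p i) (𝓝 0) (𝓝 0) := by
  simpa using ((continuous_apply i).div_const (p i)).tendsto (0 : ι → ℝ)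

section Simplex

variable {ι : Type*} [Fintype ι]

lemma isBigO_sum_mul_comp_div {f : ℝ → ℝ} {n : ℕ} (hf : f =O[𝓝 0] (· ^ n)) (p : ι → ℝ) :
    (fun δ : ι → ℝ => ∑ i, p i * f (δ i / p i)) =O[𝓝 0] (fun δ => ‖δ‖ ^ n) := by
  refine IsBigO.fun_sum fun i _ => IsBigO.const_mul_left ?_ (p i)
  have hcoord : (fun δ : ι → ℝ => δ i / p i) =O[𝓝 0] (fun δ => ‖δ‖) :=
    IsBigO.of_bound |p i|⁻¹ (Eventually.of_forall fun δ => by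
      rw [norm_div, norm_norm, div_eq_inv_mul, Real.norm_eq_abs]
      exact mul_le_mul_of_nonneg_left (norm_le_pi_norm δ i) (by positivity))
  exact (hf.comp_tendsto (tendsto_apply_div_nhds_zero p i)).trans (hcoord.pow n)

lemma sum_mul_log_div_add_sum_mul_log_div {p : ι → ℝ} (hp : ∀ i, p i ≠ 0) (δ : ι → ℝ) :
    (∑ i, p i * log (p i / (p i + δ i))) + ∑ i, (p i + δ i) * log ((p i + δ i) / p i) =
      ∑ i, p i * (δ i / p i * log (1 + δ i / p i)) := by
  rw [← sum_add_distrib]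
  refine sum_congr rfl fun i _ => ?_
  have hdiv : (p i + δ i) / p i = 1 + δ i / p i := by field_simp [hp i]
  rw [← inv_div, log_inv, hdiv]
  field_simp [hp i]
  ring

lemma one_sub_sum_sqrt_mul {p δ : ι → ℝ} (hp : ∀ i, 0 < p i) (hpsum : ∑ i, p i = 1)
    (hδ : ∑ i, δ i = 0) :
    1 - ∑ i, √(p i * (p i + δ i)) = ∑ i, p i * (1 + δ i / p i / 2 - √(1 + δ i / p i)) := by
  have hsqrt : ∀ i, √(p i * (p i + δ i)) = p i * √(1 + δ i / p i) := fun i => by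
    rw [show p i * (p i + δ i) = p i ^ 2 * (1 + δ i / p i) by field_simp [(hp i).ne'],
      sqrt_mul (sq_nonneg _), sqrt_sq (hp i).le]
  have hlin : ∀ i, p i * (1 + δ i / p i / 2) = p i + δ i / 2 := fun i => by
    field_simp [(hp i).ne']
  simp only [hsqrt, mul_sub, hlin, sum_sub_distrib, sum_add_distrib, ← sum_div, hpsum, hδ]
  ring

lemma eventually_sum_sqrt_mul_le_one {p : ι → ℝ} (hp : ∀ i, 0 < p i) (hpsum : ∑ i, p i = 1) :
    ∀ᶠ δ in 𝓝[{δ : ι → ℝ | ∑ i, δ i = 0}] 0, ∑ i, √(p i * (p i + δ i)) ≤ 1 := by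
  have hx : ∀ᶠ δ in 𝓝 (0 : ι → ℝ), ∀ i, -1 ≤ δ i / p i := eventually_all.2 fun i =>
    (tendsto_apply_div_nhds_zero p i).eventually (eventually_ge_nhds (by norm_num))
  filter_upwards [eventually_mem_nhdsWithin, nhdsWithin_le_nhds hx] with δ hδ hx
  have := one_sub_sum_sqrt_mul hp hpsum hδ ▸ sum_nonneg fun i _ =>
    mul_nonneg (hp i).le (one_add_half_sub_sqrt_one_add_nonneg (hx i))
  linarith

lemma isBigO_one_sub_sum_sqrt_mul {p : ι → ℝ} (hp : ∀ i, 0 < p i) (hpsum : ∑ i, p i = 1) :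
    (fun δ => 1 - ∑ i, √(p i * (p i + δ i))) =O[𝓝[{δ : ι → ℝ | ∑ i, δ i = 0}] 0]
      (fun δ => ‖δ‖ ^ 2) :=
  ((isBigO_sum_mul_comp_div isBigO_one_add_half_sub_sqrt_one_add p).mono
    nhdsWithin_le_nhds).congr' (eventually_mem_nhdsWithin.mono fun _ hδ =>
      (one_sub_sum_sqrt_mul hp hpsum hδ).symm) EventuallyEq.rfl

lemma isBigO_jeffreys_sub_eight_mul_one_sub_sum_sqrt_mul {p : ι → ℝ} (hp : ∀ i, 0 < p i)
    (hpsum : ∑ i, p i = 1) :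
    (fun δ => ((∑ i, p i * log (p i / (p i + δ i))) +
        ∑ i, (p i + δ i) * log ((p i + δ i) / p i)) - 8 * (1 - ∑ i, √(p i * (p i + δ i))))
      =O[𝓝[{δ : ι → ℝ | ∑ i, δ i = 0}] 0] (fun δ => ‖δ‖ ^ 4) := by
  refine ((isBigO_sum_mul_comp_div isBigO_mul_log_one_add_sub_eight_mul p).mono
    nhdsWithin_le_nhds).congr' (eventually_mem_nhdsWithin.mono fun δ hδ => ?_) EventuallyEq.rfl
  dsimp only
  rw [sum_mul_log_div_add_sum_mul_log_div (fun i => (hp i).ne'), one_sub_sum_sqrt_mul hp hpsum hδ,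
    mul_sum, ← sum_sub_distrib]
  exact sum_congr rfl fun i _ => by ring

end Simplex

theorem jeffreys_approx_squared_geodesic_general (C : ℕ) (p : Fin C → ℝ)
    (hp : ∀ i, 0 < p i) (hpsum : ∑ i, p i = 1) :
    (fun δ : Fin C → ℝ =>
        ((∑ i, p i * Real.log (p i / (p i + δ i))) +
            (∑ i, (p i + δ i) * Real.log ((p i + δ i) / p i))) -
          (2 * Real.arccos (∑ i, Real.sqrt (p i * (p i + δ i)))) ^ 2)
      =O[nhdsWithin 0 {δ : Fin C → ℝ | ∑ i, δ i = 0}]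
      (fun δ : Fin C → ℝ => ‖δ‖ ^ 4) := by
  set s := fun δ : Fin C → ℝ => ∑ i, √(p i * (p i + δ i))
  have harccos : (fun δ => arccos (s δ) ^ 2 - 2 * (1 - s δ))
      =O[𝓝[{δ : Fin C → ℝ | ∑ i, δ i = 0}] 0] (fun δ => ‖δ‖ ^ 4) := by
    refine (IsBigO.of_bound (π ^ 4 / 48) ?_).trans
      (((isBigO_one_sub_sum_sqrt_mul hp hpsum).pow 2).congr_right fun δ => by ring)
    filter_upwards [eventually_sum_sqrt_mul_le_one hp hpsum] with δ hδ
    simpa [Real.norm_eq_abs] using abs_arccos_sq_sub_le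
      (neg_one_lt_zero.le.trans (sum_nonneg fun i _ => sqrt_nonneg _)) hδ
  exact ((isBigO_jeffreys_sub_eight_mul_one_sub_sum_sqrt_mul hp hpsum).sub
    (harccos.const_mul_left 4)).congr_left fun δ => by ring

/-- Discrete geodesic divergence approximation: the Jeffreys divergence
approximates the squared Fisher–Rao geodesic distance to fourth order,
`D_KL(p ‖ p+δ) + D_KL(p+δ ‖ p) = (2 arccos (∑ √(pᵢ (pᵢ + δᵢ))))² + O(‖δ‖⁴)`
as `δ → 0` within the hyperplane `{δ : ∑ δᵢ = 0}`. -/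
theorem jeffreys_approx_squared_geodesic (C : ℕ) (hC : 0 < C) (p : Fin C → ℝ)
    (hp : ∀ i, 0 < p i) (hpsum : ∑ i, p i = 1) :
    (fun δ : Fin C → ℝ =>
        ((∑ i, p i * Real.log (p i / (p i + δ i))) +
            (∑ i, (p i + δ i) * Real.log ((p i + δ i) / p i))) -
          (2 * Real.arccos (∑ i, Real.sqrt (p i * (p i + δ i)))) ^ 2)
      =O[nhdsWithin 0 {δ : Fin C → ℝ | ∑ i, δ i = 0}]
      (fun δ : Fin C → ℝ => ‖δ‖ ^ 4) :=
  jeffreys_approx_squared_geodesic_general C p hp hpsum
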